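/- arXiv:1612.02851 — 2 statements merged into one kernel-verified Lean document; each statement's English description precedes it below -/
import Mathlib

section
/- Let Δ be a root system of a simple complex Lie algebra and Φ ⊆ Δ a subset. There exists a positive system Δ⁺ of Δ containing Φ if and only if the additive semigroup generated by Φ does not contain 0. -/
open RootPairing

instance myInst {M : Type*} [AddCommGroup M] [Module ℝ M] : NoZeroSMulDivisors ℤ M := by
  refine ⟨fun {n x} h => ?_⟩
  have : ((n : ℝ)) • x = 0 := by rw [Int.cast_smul_eq_zsmul]; exact h
  rcases smul_eq_zero.mp this with h' | h'
  · exact Or.inl (by exact_mod_cast h')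
  · exact Or.inr h'

lemma key_add_root {ι M N : Type*} [Fintype ι] [AddCommGroup M] [Module ℝ M]
    [AddCommGroup N] [Module ℝ N] (P : RootPairing ι ℝ M N) [P.IsRootSystem]
    (hcrys : P.IsCrystallographic) (hred : P.IsReduced) (i j : ι)
    (hB : P.RootForm (P.root i) (P.root j) < 0) (hne : P.root i ≠ - P.root j) :
    P.root i + P.root j ∈ Set.range P.root := by
  haveI : P.IsCrystallographic := hcrys
  have hBii : 0 < P.RootForm (P.root i) (P.root i) := P.rootForm_pos_of_ne_zero (Submodule.subset_span (Set.mem_range_self i)) (P.ne_zero i)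
  have hBjj : 0 < P.RootForm (P.root j) (P.root j) := P.rootForm_pos_of_ne_zero (Submodule.subset_span (Set.mem_range_self j)) (P.ne_zero j)
  have h2 : 2 * P.RootForm (P.root i) (P.root j)
      = P.pairing i j * P.RootForm (P.root j) (P.root j) :=
    P.toInvariantForm.two_mul_apply_root_root i j
  have hsym : P.RootForm (P.root j) (P.root i) = P.RootForm (P.root i) (P.root j) :=
    P.rootForm_symmetric.eq (P.root j) (P.root i)
  have h2' : 2 * P.RootForm (P.root i) (P.root j)
      = P.pairing j i * P.RootForm (P.root i) (P.root i) := by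
    rw [← hsym]; exact P.toInvariantForm.two_mul_apply_root_root j i
  have hpij : P.pairing i j < 0 := by nlinarith
  have hpji : P.pairing j i < 0 := by nlinarith
  by_cases hz1 : P.pairing i j = -1
  · refine ⟨P.reflectionPerm j i, ?_⟩
    rw [P.root_reflectionPerm, P.reflection_apply_root, hz1]
    module
  by_cases hw1 : P.pairing j i = -1
  · refine ⟨P.reflectionPerm i j, ?_⟩
    rw [P.root_reflectionPerm, P.reflection_apply_root, hw1]
    module
  exfalso
  obtain ⟨z, hz⟩ : ∃ z : ℤ, (z : ℝ) = P.pairing i j := by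
    obtain ⟨z, hz⟩ := P.exists_value (S := ℤ) i j; exact ⟨z, by simpa using hz⟩
  obtain ⟨w, hw⟩ : ∃ w : ℤ, (w : ℝ) = P.pairing j i := by
    obtain ⟨w, hw⟩ := P.exists_value (S := ℤ) j i; exact ⟨w, by simpa using hw⟩
  have hz2 : (z : ℝ) ≤ -2 := by
    have h1 : z < 0 := by exact_mod_cast hz ▸ hpij
    have h2 : z ≠ -1 := by rintro rfl; apply hz1; rw [← hz]; norm_num
    have : z ≤ -2 := by omega
    exact_mod_cast this
  have hw2 : (w : ℝ) ≤ -2 := by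
    have h1 : w < 0 := by exact_mod_cast hw ▸ hpji
    have h2 : w ≠ -1 := by rintro rfl; apply hw1; rw [← hw]; norm_num
    have : w ≤ -2 := by omega
    exact_mod_cast this
  rw [← hz] at hpij hz1 h2
  rw [← hw] at hpji hw1 h2'
  -- Cauchy-Schwarz
  have hCS : P.RootForm (P.root i) (P.root j) * P.RootForm (P.root i) (P.root j)
      ≤ P.RootForm (P.root i) (P.root i) * P.RootForm (P.root j) (P.root j) := by
    have h0 := P.zero_le_rootForm
      (P.RootForm (P.root j) (P.root j) • P.root i - P.RootForm (P.root i) (P.root j) • P.root j)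
    simp only [map_sub, map_smul, LinearMap.sub_apply, LinearMap.smul_apply, smul_eq_mul] at h0
    rw [hsym] at h0
    nlinarith [h0, hBjj]
  have hcw4 : P.coxeterWeight i j = 4 := by
    rw [coxeterWeight, ← hz, ← hw]
    have h4 : (2 * P.RootForm (P.root i) (P.root j)) * (2 * P.RootForm (P.root i) (P.root j))
        = ((z:ℝ) * P.RootForm (P.root j) (P.root j)) * ((w:ℝ) * P.RootForm (P.root i) (P.root i)) := by
      rw [← h2, ← h2']
    have hle : (z:ℝ) * w ≤ 4 := by nlinarith [hCS, h4, mul_pos hBii hBjj]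
    have hge : (4:ℝ) ≤ (z:ℝ) * w := by nlinarith [hz2, hw2]
    linarith
  have hdep : ¬ LinearIndependent ℝ ![P.root i, P.root j] := fun hl => by
    haveI : IsAddTorsionFree M := .of_isTorsionFree ℝ M
    haveI := P.infinite_of_linearIndependent_coxeterWeight_four (i := i) (j := j) hl hcw4
    exact not_finite ι
  rcases hred.eq_or_eq_neg i j hdep with h | h
  · rw [h] at hB; linarith
  · exact hne h


/-- `T` is a positive system of `R`. -/
def IsPosSystem {V : Type*} [AddCommGroup V] (R T : Set V) : Prop :=
  T ⊆ R ∧ (∀ ν ∈ R, ν ∈ T ∨ -ν ∈ T) ∧ (∀ ν ∈ T, -ν ∉ T) ∧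
    ∀ μ ∈ T, ∀ ν ∈ T, μ + ν ∈ R → μ + ν ∈ T

/-- The additive semigroup generated by `Φ` contains `0`. -/
def ZeroInSemigroup {V : Type*} [AddCommGroup V] (Φ : Set V) : Prop :=
  ∃ l : List V, l ≠ [] ∧ (∀ x ∈ l, x ∈ Φ) ∧ l.sum = 0

section Aux

open RootPairing

lemma sum_ne_zero_of_posSystem {ι M N : Type*} [Fintype ι] [AddCommGroup M] [Module ℝ M]
    [AddCommGroup N] [Module ℝ N] (P : RootPairing ι ℝ M N) [P.IsRootSystem]
    (hcrys : P.IsCrystallographic) (hred : P.IsReduced) (T : Set M)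
    (hTΔ : T ⊆ Set.range P.root) (hTneg : ∀ ν ∈ T, -ν ∉ T)
    (hTadd : ∀ μ ∈ T, ∀ ν ∈ T, μ + ν ∈ Set.range P.root → μ + ν ∈ T) :
    ∀ n (l : List M), l.length ≤ n → l ≠ [] → (∀ x ∈ l, x ∈ T) → l.sum ≠ 0 := by
  classical
  intro n
  induction n with
  | zero =>
    intro l hlen hne _
    cases l with
    | nil => exact absurd rfl hne
    | cons a l => simp at hlen
  | succ n ih =>
    intro l hlen hne hmem hsum
    obtain ⟨x, rest, rfl⟩ : ∃ a t, l = a :: t := by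
      cases l with
      | nil => exact absurd rfl hne
      | cons a t => exact ⟨a, t, rfl⟩
    have hx : x ∈ T := hmem x (by simp)
    obtain ⟨i, hi⟩ := hTΔ hx
    cases rest with
    | nil =>
      simp only [List.sum_cons, List.sum_nil, add_zero] at hsum
      exact P.ne_zero i (by rw [hi, hsum])
    | cons b rest' =>
      set rest := b :: rest' with hrest
      have hsum' : x + rest.sum = 0 := by simpa using hsum
      haveI : P.IsCrystallographic := hcrys
      set B := P.RootForm with hBdef
      have hBx : B x rest.sum = - B x x := by
        have : B x (x + rest.sum) = 0 := by rw [hsum']; simp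
        rw [map_add] at this; linarith
      have hBxneg : B x rest.sum < 0 := by
        rw [hBx, neg_lt_zero, ← hi]; exact P.rootForm_pos_of_ne_zero (Submodule.subset_span (Set.mem_range_self i)) (P.ne_zero i)
      have hy : ∃ y ∈ rest, B x y < 0 := by
        by_contra hc
        push_neg at hc
        have : 0 ≤ B x rest.sum := by
          rw [map_list_sum]
          refine List.sum_nonneg fun r hr => ?_
          obtain ⟨y, hy, rfl⟩ := List.mem_map.mp hr
          exact hc y hy
        linarith
      obtain ⟨y, hyr, hBxy⟩ := hy
      have hyT : y ∈ T := hmem y (by simp [hyr])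
      obtain ⟨j, hj⟩ := hTΔ hyT
      have hxy : x ≠ -y := by
        intro h
        exact hTneg y hyT (by rw [← h]; exact hx)
      have hadd : x + y ∈ Set.range P.root := by
        rw [← hi, ← hj]
        exact key_add_root P hcrys hred i j (by rw [hi, hj]; exact hBxy)
          (by rw [hi, hj]; exact fun h => hxy h)
      have hxyT : x + y ∈ T := hTadd x hx y hyT hadd
      have hperm : rest.Perm (y :: rest.erase y) := List.perm_cons_erase hyr
      refine ih ((x + y) :: rest.erase y) ?_ (by simp) ?_ ?_
      · have h1 : rest.length ≤ n := by simpa using hlen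
        have h2 : (rest.erase y).length = rest.length - 1 := List.length_erase_of_mem hyr
        have h3 : 1 ≤ rest.length := by rw [hrest]; simp
        simp only [List.length_cons, h2]
        omega
      · intro z hz
        rcases List.mem_cons.mp hz with rfl | hz
        · exact hxyT
        · exact hmem z (by simp [List.mem_of_mem_erase hz])
      · have : rest.sum = y + (rest.erase y).sum := by
          rw [hperm.sum_eq]; simp
        simp only [List.sum_cons]
        rw [add_assoc, ← this, hsum']

lemma chain_aux {M : Type*} (c : Set (Set M)) (hc : IsChain (· ⊆ ·) c) (hne : c.Nonempty)
    (l : List M) (h : ∀ x ∈ l, x ∈ ⋃₀ c) : ∃ s ∈ c, ∀ x ∈ l, x ∈ s := by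
  induction l with
  | nil => exact ⟨hne.choose, hne.choose_spec, by simp⟩
  | cons a t ih =>
    obtain ⟨s, hs, hst⟩ := ih fun x hx => h x (by simp [hx])
    obtain ⟨u, hu, hau⟩ := h a (by simp)
    have : ∃ v ∈ c, s ⊆ v ∧ u ⊆ v := by
      rcases eq_or_ne s u with rfl | hsu
      · exact ⟨s, hs, le_refl s, le_refl s⟩
      · rcases hc hs hu hsu with hle | hle
        · exact ⟨u, hu, hle, le_refl u⟩
        · exact ⟨s, hs, le_refl s, hle⟩
    obtain ⟨v, hv, hsv, huv⟩ := this
    refine ⟨v, hv, fun x hx => ?_⟩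
    rcases List.mem_cons.mp hx with rfl | hx
    · exact huv hau
    · exact hsv (hst x hx)

end Aux

/-- For the root system `Δ` of a simple complex Lie algebra (an irreducible reduced
crystallographic root system) and any `Φ ⊆ Δ`, there is a positive system of `Δ`
containing `Φ` iff the additive semigroup generated by `Φ` does not contain `0`. -/

theorem stmt0 {ι M N : Type*} [Fintype ι] [AddCommGroup M] [Module ℝ M]
    [AddCommGroup N] [Module ℝ N] (P : RootPairing ι ℝ M N) [P.IsRootSystem]
    (hcrys : P.IsCrystallographic) (hred : P.IsReduced)
    (Δ : Set M) (hΔ : Δ = Set.range P.root)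
    (Φ : Set M) (hΦ : Φ ⊆ Δ) :
    (∃ T : Set M, IsPosSystem Δ T ∧ Φ ⊆ T) ↔ ¬ ZeroInSemigroup Φ := by
  classical
  subst hΔ
  constructor
  · rintro ⟨T, ⟨hTΔ, _, hTneg, hTadd⟩, hΦT⟩ ⟨l, hlne, hlmem, hlsum⟩
    exact sum_ne_zero_of_posSystem P hcrys hred T hTΔ hTneg hTadd l.length l le_rfl hlne
      (fun x hx => hΦT (hlmem x hx)) hlsum
  · intro h0
    -- Zorn
    obtain ⟨m, hΦm, hmMax⟩ := zorn_subset_nonempty {s : Set M | ¬ ZeroInSemigroup s}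
      (fun c hc hchain hcne => by
        refine ⟨⋃₀ c, fun ⟨l, hlne, hlmem, hlsum⟩ => ?_, fun s hs => Set.subset_sUnion_of_mem hs⟩
        obtain ⟨s, hs, hls⟩ := chain_aux c hchain hcne l hlmem
        exact hc hs ⟨l, hlne, hls, hlsum⟩) Φ h0
    have hmax : ∀ s, ¬ ZeroInSemigroup s → m ⊆ s → s = m := fun s hs hms => hmMax.eq_of_ge hs hms
    have hm0 : ¬ ZeroInSemigroup m := hmMax.prop
    -- key: every root or its negative is in m
    have hroot0 : ∀ x : M, x ∈ Set.range P.root → x ≠ 0 := by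
      rintro x ⟨i, rfl⟩; exact P.ne_zero i
    -- if ν ∉ m then there's a nonempty multiset in m summing to a positive multiple of -ν
    have hkey : ∀ ν : M, ν ≠ 0 → ν ∉ m →
        ∃ (k : ℕ) (b : Multiset M), 1 ≤ k ∧ b ≠ 0 ∧ (∀ x ∈ b, x ∈ m) ∧ b.sum = -(k • ν) := by
      intro ν hν0 hνm
      have hins : ZeroInSemigroup (insert ν m) := by
        by_contra hc
        exact hνm (by rw [← hmax _ hc (Set.subset_insert ν m)]; exact Set.mem_insert ν m)
      obtain ⟨l, hlne, hlmem, hlsum⟩ := hins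
      set s : Multiset M := (l : Multiset M) with hs
      set a := s.filter (· = ν) with ha
      set b := s.filter (fun x => ¬ x = ν) with hb
      have hab : a + b = s := Multiset.filter_add_not _ _
      have hbm : ∀ x ∈ b, x ∈ m := by
        intro x hx
        have h1 := Multiset.of_mem_filter hx
        have h2 : x ∈ s := Multiset.mem_of_mem_filter hx
        rcases hlmem x (by simpa [hs] using h2) with rfl | hxm
        · exact absurd rfl h1
        · exact hxm
      have hasum : a.sum = Multiset.card a • ν := by
        have hmem' : ∀ x ∈ a, x = ν := fun x hx => by
          rw [ha, Multiset.mem_filter] at hx; exact hx.2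
        have hrep : a = Multiset.replicate (Multiset.card a) ν :=
          Multiset.eq_replicate_of_mem hmem'
        calc a.sum = (Multiset.replicate (Multiset.card a) ν).sum := by rw [← hrep]
          _ = Multiset.card a • ν := Multiset.sum_replicate _ _
      have hsum0 : Multiset.card a • ν + b.sum = 0 := by
        rw [← hasum, ← Multiset.sum_add, hab, hs]
        simpa using hlsum
      have hka : 1 ≤ Multiset.card a := by
        rcases Nat.eq_zero_or_pos (Multiset.card a) with h | h
        · exfalso
          rw [Multiset.card_eq_zero] at h
          have hbs : b = s := by rw [← hab, h, zero_add]
          refine hm0 ⟨l, hlne, ?_, hlsum⟩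
          intro x hx
          exact hbm x (by rw [hbs]; simpa [hs] using hx)
        · exact h
      have hbne : b ≠ 0 := by
        intro hb0
        rw [hb0] at hsum0
        simp only [Multiset.sum_zero, add_zero] at hsum0
        have hr : ((Multiset.card a : ℝ)) • ν = 0 := by
          rw [Nat.cast_smul_eq_nsmul]; exact hsum0
        rcases smul_eq_zero.mp hr with h' | h'
        · have : Multiset.card a = 0 := by exact_mod_cast h'
          omega
        · exact hν0 h'
      exact ⟨Multiset.card a, b, hka, hbne, hbm, by
        rw [eq_neg_iff_add_eq_zero, add_comm]; exact hsum0⟩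
    have hcover : ∀ ν ∈ Set.range P.root, ν ∈ m ∨ -ν ∈ m := by
      intro ν hν
      by_contra hc
      push_neg at hc
      obtain ⟨hνm, hνm'⟩ := hc
      have hν0 : ν ≠ 0 := hroot0 ν hν
      obtain ⟨k, b, hk, hbne, hbm, hbsum⟩ := hkey ν hν0 hνm
      obtain ⟨k', b', hk', hbne', hbm', hbsum'⟩ := hkey (-ν) (by simpa using hν0) hνm'
      -- combined multiset k' • b + k • b'
      set cmb : Multiset M := k' • b + k • b' with hcmb
      refine hm0 ⟨cmb.toList, ?_, ?_, ?_⟩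
      · intro hnil
        obtain ⟨x, hx⟩ := Multiset.exists_mem_of_ne_zero hbne
        have hxc : x ∈ cmb := Multiset.mem_add.mpr
          (Or.inl ((Multiset.mem_nsmul_of_ne_zero (by omega)).mpr hx))
        rw [← Multiset.mem_toList, hnil] at hxc
        simp at hxc
      · intro x hx
        rw [Multiset.mem_toList, hcmb, Multiset.mem_add] at hx
        rcases hx with hx | hx
        · exact hbm x (Multiset.mem_of_mem_nsmul hx)
        · exact hbm' x (Multiset.mem_of_mem_nsmul hx)
      · rw [Multiset.sum_toList, hcmb, Multiset.sum_add, Multiset.sum_nsmul, Multiset.sum_nsmul,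
          hbsum, hbsum']
        simp [smul_smul, ← neg_smul, mul_comm]
    refine ⟨m ∩ Set.range P.root, ⟨Set.inter_subset_right, ?_, ?_, ?_⟩, ?_⟩
    · intro ν hν
      have hνneg : -ν ∈ Set.range P.root := by
        obtain ⟨i, rfl⟩ := hν
        exact ⟨P.reflectionPerm i i, by rw [P.root_reflectionPerm, P.reflection_apply_self]⟩
      rcases hcover ν hν with h | h
      · exact Or.inl ⟨h, hν⟩
      · exact Or.inr ⟨h, hνneg⟩
    · rintro ν ⟨hνm, hνr⟩ ⟨hνm', _⟩
      refine hm0 ⟨[ν, -ν], by simp, ?_, by simp⟩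
      intro x hx
      simp only [List.mem_cons, List.not_mem_nil, or_false] at hx
      rcases hx with rfl | rfl
      exacts [hνm, hνm']
    · rintro μ ⟨hμm, hμr⟩ ν ⟨hνm, hνr⟩ hμν
      refine ⟨?_, hμν⟩
      rcases hcover _ hμν with h | h
      · exact h
      · exfalso
        refine hm0 ⟨[μ, ν, -(μ+ν)], by simp, ?_, ?_⟩
        · intro x hx
          simp only [List.mem_cons, List.not_mem_nil, or_false] at hx
          rcases hx with rfl | rfl | rfl
          exacts [hμm, hνm, h]
        · simp only [List.sum_cons, List.sum_nil]
          abel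
    · exact fun x hx => ⟨hΦm hx, hΦ hx⟩
end

section
/- Let S be a finite set of nonzero vectors in a rational vector space and let S̄ = ℚ₊S ∩ R be its saturation inside a finite set R. Then the semigroup generated by S contains 0 if and only if the semigroup generated by S̄ contains 0. -/
lemma zis_mono {V : Type*} [AddCommGroup V] {Φ Ψ : Set V} (h : Φ ⊆ Ψ) :
    ZeroInSemigroup Φ → ZeroInSemigroup Ψ := by
  rintro ⟨l, h1, h2, h3⟩
  exact ⟨l, h1, fun x hx => h (h2 x hx), h3⟩

lemma sum_flatMap' {α β : Type*} [AddCommMonoid β] (l : List α) (f : α → List β) :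
    (l.flatMap f).sum = (l.map fun x => (f x).sum).sum := by
  induction l with
  | nil => simp
  | cons a t ih => simp [List.flatMap_cons, ih]

/-- The semigroup generated by `S` contains `0` iff the semigroup generated by its
saturation `S̄ = ℚ₊S ∩ R` contains `0`. -/
theorem stmt3 {V : Type*} [AddCommGroup V] [Module ℚ V]
    (R : Set V) (hfin : R.Finite) (h0 : (0 : V) ∉ R) (hsym : ∀ ν ∈ R, -ν ∈ R)
    (S : Set V) (hS : S ⊆ R)
    (Sbar : Set V) (hSbar : Sbar = {x | ∃ ν ∈ S, ∃ r : ℚ, 0 < r ∧ x = r • ν} ∩ R) :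
    ZeroInSemigroup S ↔ ZeroInSemigroup Sbar := by
  constructor
  · refine zis_mono ?_
    intro ν hν
    rw [hSbar]
    exact ⟨⟨ν, hν, 1, one_pos, (one_smul ℚ ν).symm⟩, hS hν⟩
  · rintro ⟨l, hne, hmem, hsum⟩
    -- choose data for each element of l
    have hdata : ∀ x ∈ l, ∃ ν ∈ S, ∃ r : ℚ, 0 < r ∧ x = r • ν := by
      intro x hx
      have := hmem x hx
      rw [hSbar] at this
      exact this.1
    classical
    choose! ν hνS r hr hx using hdata
    set d : ℕ := (l.map fun x => (r x).den).prod with hd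
    have hdpos : 0 < d := by
      apply List.prod_pos
      intro a ha
      simp only [List.mem_map] at ha
      obtain ⟨x, hxl, rfl⟩ := ha
      exact (r x).pos
    have hdvd : ∀ x ∈ l, (r x).den ∣ d := by
      intro x hx
      exact List.dvd_prod (List.mem_map_of_mem (f := fun x => (r x).den) hx)
    -- coefficient for each x
    set n : V → ℕ := fun x => (d / (r x).den) * (r x).num.toNat with hn
    have hcast : ∀ x ∈ l, ((n x : ℚ)) = (d : ℚ) * r x := by
      intro x hx
      obtain ⟨k, hk⟩ := hdvd x hx
      have hknat : d / (r x).den = k := by rw [hk]; exact Nat.mul_div_cancel_left k (r x).pos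
      have hnum : ((r x).num.toNat : ℤ) = (r x).num :=
        Int.toNat_of_nonneg (Rat.num_nonneg.mpr (le_of_lt (hr x hx)))
      have h1 : (r x) * ((r x).den : ℚ) = ((r x).num : ℚ) := Rat.mul_den_eq_num _
      have hnumQ : (((r x).num.toNat : ℕ) : ℚ) = ((r x).num : ℚ) := by exact_mod_cast hnum
      rw [hn]
      simp only [hknat]
      push_cast
      rw [hnumQ, hk]
      push_cast
      rw [← h1]
      ring
    have hnpos : ∀ x ∈ l, 0 < n x := by
      intro x hx
      obtain ⟨k, hk⟩ := hdvd x hx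
      have hknat : d / (r x).den = k := by rw [hk]; exact Nat.mul_div_cancel_left k (r x).pos
      have hk0 : 0 < k := by
        rcases Nat.eq_zero_or_pos k with h | h
        · exfalso; rw [h, mul_zero] at hk; omega
        · exact h
      have hnum : 0 < (r x).num.toNat := by
        have := Rat.num_pos.mpr (hr x hx)
        omega
      rw [hn]
      exact Nat.mul_pos (by omega) hnum
    refine ⟨l.flatMap fun x => List.replicate (n x) (ν x), ?_, ?_, ?_⟩
    · obtain ⟨a, t, rfl⟩ := List.exists_cons_of_ne_nil hne
      simp only [List.flatMap_cons]
      have hrep : List.replicate (n a) (ν a) ≠ [] := by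
        have := hnpos a List.mem_cons_self
        simp only [ne_eq, List.replicate_eq_nil_iff]
        omega
      exact fun h => hrep (List.append_eq_nil_iff.mp h).1
    · intro x hx
      simp only [List.mem_flatMap, List.mem_replicate] at hx
      obtain ⟨a, hal, _, rfl⟩ := hx
      exact hνS a hal
    · rw [sum_flatMap']
      have heq : (l.map fun x => (List.replicate (n x) (ν x)).sum)
          = l.map fun x => (d : ℚ) • x := by
        apply List.map_congr_left
        intro x hxl
        rw [List.sum_replicate, ← Nat.cast_smul_eq_nsmul ℚ, hcast x hxl, mul_smul,
          ← hx x hxl]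
      rw [heq, ← List.smul_sum, hsum, smul_zero]
end
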